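/- arXiv:2601.12388 — 2 statements merged into one kernel-verified Lean document; each statement's English description precedes it below -/
import Mathlib

section
/- Let φ : R → R' be a surjective homomorphism of commutative rings and let I be a strongly hollow ideal of R with I ⊄ ker φ. Then the image ideal φ(I) is strongly hollow in R'. -/
def StronglyHollow {R : Type*} [CommRing R] (I : Ideal R) : Prop :=
  ∀ A B : Ideal R, I ≤ A + B → I ≤ A ∨ I ≤ B

theorem Ideal.comap_sup_of_surjective {R S : Type*} [Ring R] [Ring S] (f : R →+* S)
    (hf : Function.Surjective f) (A B : Ideal S) :
    (A ⊔ B).comap f = A.comap f ⊔ B.comap f := by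
  refine le_antisymm ?_ (Ideal.le_comap_sup f)
  -- both `comap f A` and `comap f B` already contain `ker f = comap f ⊥`
  rw [← Ideal.map_sup_comap_of_surjective f hf A B, Ideal.comap_map_of_surjective f hf]
  exact sup_le le_rfl ((Ideal.comap_mono bot_le).trans le_sup_left)

theorem StronglyHollow.map_of_surjective {R S : Type*} [CommRing R] [CommRing S] (f : R →+* S)
    (hf : Function.Surjective f) {I : Ideal R} (hI : StronglyHollow I) :
    StronglyHollow (I.map f) := by
  intro A B hAB
  have hI_le : I ≤ A.comap f ⊔ B.comap f := by
    rw [← Ideal.comap_sup_of_surjective f hf]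
    exact Ideal.map_le_iff_le_comap.1 hAB
  exact (hI _ _ hI_le).imp Ideal.map_le_iff_le_comap.2 Ideal.map_le_iff_le_comap.2

theorem stmt3_general {R R' : Type*} [CommRing R] [CommRing R'] (φ : R →+* R')
    (hφ : Function.Surjective φ) (I : Ideal R) (hI : StronglyHollow I) :
    StronglyHollow (I.map φ) :=
  hI.map_of_surjective φ hφ

theorem stmt3 {R R' : Type*} [CommRing R] [CommRing R'] (φ : R →+* R')
    (hφ : Function.Surjective φ) (I : Ideal R) (hI : StronglyHollow I)
    (hker : ¬ I ≤ RingHom.ker φ) :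
    StronglyHollow (I.map φ) :=
  stmt3_general φ hφ I hI
end

section
/- Let R be a commutative ring and I a strongly hollow ideal of R. Then there is at most one maximal ideal M of R such that I ⊄ Mⁿ for some natural number n. Equivalently, if M and N are distinct maximal ideals with I ⊄ M^i and I ⊄ N^j for some i, j ∈ ℕ, a contradiction arises since M^i + N^j = R. -/
theorem StronglyHollow.le_or_le_of_isCoprime {R : Type*} [CommRing R] {I A B : Ideal R}
    (hI : StronglyHollow I) (hAB : IsCoprime A B) : I ≤ A ∨ I ≤ B :=
  hI A B <| by
    rw [Submodule.add_eq_sup, Ideal.isCoprime_iff_sup_eq.mp hAB]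
    exact le_top

theorem Ideal.IsMaximal.isCoprime_pow_of_ne {R : Type*} [CommRing R] {M N : Ideal R}
    (hM : M.IsMaximal) (hN : N.IsMaximal) (hne : M ≠ N) (i j : ℕ) :
    IsCoprime (M ^ i) (N ^ j) :=
  (Ideal.isCoprime_iff_sup_eq.mpr (hM.coprime_of_ne hN hne)).pow

theorem stmt18 {R : Type*} [CommRing R] (I : Ideal R) (hI : StronglyHollow I) :
    ∀ M N : Ideal R, M.IsMaximal → N.IsMaximal →
      (∃ i : ℕ, ¬ I ≤ M ^ i) → (∃ j : ℕ, ¬ I ≤ N ^ j) → M = N := by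
  intro M N hM hN ⟨i, hi⟩ ⟨j, hj⟩
  by_contra hne
  exact (hI.le_or_le_of_isCoprime (hM.isCoprime_pow_of_ne hN hne i j)).elim hi hj
end
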